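/- Let N ≥ 1, let u ∈ ℂ^N with u ≠ 0, let σ_u ≥ 0, σ_e > 0, and let m2 > 0 and m4 > 0 be real constants (representing E[|θ|²] and E[|θ|⁴]). For f ∈ ℂ^N define φ(f) = ∑_{i} conj(f i) * (u i) and the random-parameter zeroth-order excess MSE M_r(f) = ((m4 * σ_u² + m2 * σ_e²) * |φ(f) − 1|² + (m2 * σ_u² + σ_e²) * σ_e² * ‖f‖²) / (m4 * |φ(f)|² + m2 * σ_e² * ‖f‖²). Then f_MVU = u / ‖u‖² is a global minimizer: for every f ∈ ℂ^N with f ≠ 0, M_r(u / ‖u‖²) ≤ M_r(f); moreover M_r(u / ‖u‖²) = (m2 * σ_u² + σ_e²) * σ_e² / (m4 * ‖u‖² + m2 * σ_e²). -/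

import Mathlib

noncomputable section

/-- `phi u f = f^H u = ∑ i, conj (f i) * u i`. -/
def phi {N : ℕ} (u f : Fin N → ℂ) : ℂ := ∑ i, (starRingEnd ℂ) (f i) * u i

/-- `nsq f = ‖f‖² = ∑ i, |f i|²`. -/
def nsq {N : ℕ} (f : Fin N → ℂ) : ℝ := ∑ i, ‖f i‖ ^ 2

/-- The random-parameter zeroth-order excess MSE of the ZF input estimator,
with `m2 = E[|θ|²]` and `m4 = E[|θ|⁴]`. -/
def Mrand {N : ℕ} (u : Fin N → ℂ) (σu σe m2 m4 : ℝ) (f : Fin N → ℂ) : ℝ :=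
  ((m4 * σu ^ 2 + m2 * σe ^ 2) * ‖phi u f - 1‖ ^ 2 +
      (m2 * σu ^ 2 + σe ^ 2) * σe ^ 2 * nsq f) /
    (m4 * ‖phi u f‖ ^ 2 + m2 * σe ^ 2 * nsq f)

/-- The MVU estimating filter `f_MVU = u / ‖u‖²`. -/
def fMVU {N : ℕ} (u : Fin N → ℂ) : Fin N → ℂ := fun i => u i / ((nsq u : ℝ) : ℂ)

lemma nsq_nonneg {N : ℕ} (f : Fin N → ℂ) : 0 ≤ nsq f :=
  Finset.sum_nonneg fun _ _ => sq_nonneg _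

lemma nsq_pos {N : ℕ} (f : Fin N → ℂ) (hf : f ≠ 0) : 0 < nsq f := by
  obtain ⟨i, hi⟩ : ∃ i, f i ≠ 0 := by
    by_contra h
    push_neg at h
    exact hf (funext h)
  refine Finset.sum_pos' (fun j _ => sq_nonneg _) ⟨i, Finset.mem_univ i, ?_⟩
  exact pow_pos (norm_pos_iff.mpr hi) 2

lemma phi_self {N : ℕ} (u : Fin N → ℂ) : phi u u = (nsq u : ℂ) := by
  unfold phi nsq
  push_cast
  refine Finset.sum_congr rfl fun i _ => ?_
  rw [← Complex.normSq_eq_conj_mul_self]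
  norm_cast
  rw [Complex.sq_norm]

lemma phi_fMVU {N : ℕ} (u : Fin N → ℂ) (hu : u ≠ 0) : phi u (fMVU u) = 1 := by
  have hU : (nsq u : ℝ) ≠ 0 := ne_of_gt (nsq_pos u hu)
  have hUc : ((nsq u : ℝ) : ℂ) ≠ 0 := by exact_mod_cast hU
  unfold phi fMVU
  have h : ∑ i, (starRingEnd ℂ) (u i / ((nsq u : ℝ) : ℂ)) * u i
      = (((nsq u : ℝ) : ℂ))⁻¹ * ∑ i, (starRingEnd ℂ) (u i) * u i := by
    rw [Finset.mul_sum]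
    refine Finset.sum_congr rfl fun i _ => ?_
    rw [map_div₀]
    simp [div_eq_mul_inv]
    ring
  rw [h]
  have h2 := phi_self u
  unfold phi at h2
  rw [h2, inv_mul_cancel₀ hUc]

lemma nsq_fMVU {N : ℕ} (u : Fin N → ℂ) (hu : u ≠ 0) : nsq (fMVU u) = (nsq u)⁻¹ := by
  have hU : (0:ℝ) < nsq u := nsq_pos u hu
  unfold nsq fMVU
  have h : ∀ i : Fin N, ‖u i / ((nsq u : ℝ) : ℂ)‖ ^ 2
      = ‖u i‖ ^ 2 / (nsq u)^2 := by
    intro i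
    rw [norm_div, div_pow]
    congr 1
    rw [Complex.norm_real, Real.norm_eq_abs, abs_of_pos hU]
  simp only [h, ← Finset.sum_div]
  have h2 : (∑ i, ‖u i‖ ^ 2) = nsq u := rfl
  rw [h2]
  field_simp

lemma cauchy_schwarz_phi {N : ℕ} (u f : Fin N → ℂ) :
    ‖phi u f‖ ^ 2 ≤ nsq f * nsq u := by
  let F : EuclideanSpace ℂ (Fin N) := WithLp.toLp 2 f
  let U : EuclideanSpace ℂ (Fin N) := WithLp.toLp 2 u
  have h1 : phi u f = inner (𝕜 := ℂ) F U := by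
    rw [PiLp.inner_apply]
    unfold phi
    refine Finset.sum_congr rfl fun i _ => ?_
    simp [F, U, RCLike.inner_apply, mul_comm]
  have h2 : ‖phi u f‖ ≤ ‖F‖ * ‖U‖ := by
    rw [h1]
    exact norm_inner_le_norm (𝕜 := ℂ) F U
  have hnF : ‖F‖ ^ 2 = nsq f := by
    rw [EuclideanSpace.norm_eq, Real.sq_sqrt (Finset.sum_nonneg fun i _ => sq_nonneg _)]
    rfl
  have hnU : ‖U‖ ^ 2 = nsq u := by
    rw [EuclideanSpace.norm_eq, Real.sq_sqrt (Finset.sum_nonneg fun i _ => sq_nonneg _)]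
    rfl
  calc ‖phi u f‖ ^ 2 ≤ (‖F‖ * ‖U‖) ^ 2 := by
        apply pow_le_pow_left₀ (norm_nonneg _) h2
    _ = nsq f * nsq u := by rw [mul_pow, hnF, hnU]

/-- Proposition 2: the MVU filter globally minimizes the random-parameter
zeroth-order excess MSE of the ZF input estimator, with minimum value
`(m2 σu² + σe²) σe² / (m4 ‖u‖² + m2 σe²)`. -/
theorem mvu_minimizes_rand_zeroth_order_excess_mse
    (N : ℕ) (hN : 1 ≤ N) (u : Fin N → ℂ) (hu : u ≠ 0)
    (σu σe m2 m4 : ℝ) (hσu : 0 ≤ σu) (hσe : 0 < σe) (hm2 : 0 < m2) (hm4 : 0 < m4) :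
    (∀ f : Fin N → ℂ, f ≠ 0 → Mrand u σu σe m2 m4 (fMVU u) ≤ Mrand u σu σe m2 m4 f) ∧
      Mrand u σu σe m2 m4 (fMVU u) =
        (m2 * σu ^ 2 + σe ^ 2) * σe ^ 2 / (m4 * nsq u + m2 * σe ^ 2) := by
  have hU : (0:ℝ) < nsq u := nsq_pos u hu
  have hval : Mrand u σu σe m2 m4 (fMVU u) =
      (m2 * σu ^ 2 + σe ^ 2) * σe ^ 2 / (m4 * nsq u + m2 * σe ^ 2) := by
    unfold Mrand
    rw [phi_fMVU u hu, nsq_fMVU u hu]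
    simp only [sub_self, map_zero, map_one, norm_zero, norm_one, one_pow, mul_one, mul_zero, zero_add]
    have h1 : (0:ℝ) < m2 * σe ^ 2 * (nsq u)⁻¹ :=
      mul_pos (mul_pos hm2 (pow_pos hσe 2)) (inv_pos.2 hU)
    rw [div_eq_div_iff (by linarith) (by positivity)]
    field_simp
    try ring
  refine ⟨fun f hf => ?_, hval⟩
  rw [hval]
  have hq : (0:ℝ) < nsq f := nsq_pos f hf
  have hcs := cauchy_schwarz_phi u f
  unfold Mrand
  rw [div_le_div_iff₀ (by positivity)
    (by positivity)]
  have hd0 : (0:ℝ) ≤ ‖phi u f - 1‖ ^ 2 := sq_nonneg _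
  have h1 : (0:ℝ) ≤ (m4 * σu ^ 2 + m2 * σe ^ 2) * ‖phi u f - 1‖ ^ 2 *
      (m4 * nsq u + m2 * σe ^ 2) := by positivity
  have h2 : (0:ℝ) ≤ (m2 * σu ^ 2 + σe ^ 2) * σe ^ 2 *
      (m4 * (nsq f * nsq u - ‖phi u f‖ ^ 2)) := by
    apply mul_nonneg (by positivity)
    exact mul_nonneg hm4.le (by linarith)
  nlinarith [h1, h2]
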